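/- For every p ≥ 1, (1/π) ∫_{-6/√5}^{6/√5} (sin²t / t²)^p dt ≤ √(3/π) / √p. -/

import Mathlib

/-!
For `|t| ≤ π` every factor of Euler's product `sin t / t = ∏ (1 - t² / (j π)²)` lies in `[0, 1]`
and is at most `exp (-t² / (j π)²)`; since `∑ 1 / j² = π² / 6` this gives
`sin² t / t² ≤ exp (-t² / 3)` on `[-π, π] ⊇ [-6/√5, 6/√5]`. Raising to the power `p` and
integrating over the whole line bounds the integral by the Gaussian integral `√(3π / p)`.
-/

open MeasureTheory Real

/-- `(sin t / t)^2`, extended continuously by `1` at `t = 0`. -/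
noncomputable def sinc2 (t : ℝ) : ℝ := if t = 0 then 1 else Real.sin t ^ 2 / t ^ 2

open Filter Topology

theorem prod_one_sub_le_exp_neg_sum {ι : Type*} (s : Finset ι) {a : ι → ℝ}
    (ha : ∀ i ∈ s, a i ≤ 1) : ∏ i ∈ s, (1 - a i) ≤ exp (-∑ i ∈ s, a i) := by
  rw [← Finset.sum_neg_distrib, Real.exp_sum]
  exact Finset.prod_le_prod (fun i hi => sub_nonneg.2 (ha i hi))
    fun i _ => Real.one_sub_le_exp_neg _

theorem sin_le_mul_exp_neg_sq_div_six {x : ℝ} (hx₀ : 0 ≤ x) (hx : x ≤ π) :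
    sin x ≤ x * exp (-(x ^ 2 / 6)) := by
  set y := x / π with hy
  have hy₀ : 0 ≤ y := div_nonneg hx₀ pi_pos.le
  have hy₁ : y ^ 2 ≤ 1 := pow_le_one₀ hy₀ ((div_le_one pi_pos).2 hx)
  have hsum : Tendsto (fun n : ℕ => ∑ j ∈ Finset.range n, y ^ 2 / ((j : ℝ) + 1) ^ 2) atTop
      (𝓝 (y ^ 2 * (π ^ 2 / 6))) := by
    have := (hasSum_nat_add_iff' 1).2 (hasSum_zeta_two.mul_left (y ^ 2))
    simpa [div_eq_mul_inv] using this.tendsto_sum_nat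
  have hbound := le_of_tendsto_of_tendsto' (tendsto_euler_sin_prod y)
    (((continuous_exp.tendsto _).comp hsum.neg).const_mul (π * y)) fun n =>
      mul_le_mul_of_nonneg_left (prod_one_sub_le_exp_neg_sum _ fun j _ =>
        div_le_one_of_le₀ (hy₁.trans (one_le_pow₀ (by simp))) (by positivity)) (by positivity)
  have hπy : π * y = x := by rw [hy]; field_simp
  have hexponent : y ^ 2 * (π ^ 2 / 6) = x ^ 2 / 6 := by rw [hy]; field_simp
  rwa [hπy, hexponent] at hbound

lemma sinc2_eq_sinc_sq (t : ℝ) : sinc2 t = sinc t ^ 2 := by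
  rw [sinc2, sinc_apply]; split_ifs <;> simp [div_pow]

lemma sinc2_le_exp_neg_sq_div_three {t : ℝ} (ht : |t| ≤ π) : sinc2 t ≤ exp (-(t ^ 2 / 3)) := by
  rcases eq_or_ne t 0 with rfl | ht₀
  · simp [sinc2]
  have hpos : 0 < |t| := abs_pos.2 ht₀
  have hsinc : sinc t = sin |t| / |t| := by
    rw [← sinc_of_ne_zero hpos.ne']
    rcases abs_choice t with h | h <;> simp [h]
  have hle : sin |t| / |t| ≤ exp (-(t ^ 2 / 6)) := by
    rw [div_le_iff₀ hpos, mul_comm, ← sq_abs t]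
    exact sin_le_mul_exp_neg_sq_div_six hpos.le ht
  calc sinc2 t = (sin |t| / |t|) ^ 2 := by rw [sinc2_eq_sinc_sq, hsinc]
    _ ≤ exp (-(t ^ 2 / 6)) ^ 2 :=
      pow_le_pow_left₀ (div_nonneg (sin_nonneg_of_nonneg_of_le_pi hpos.le ht) hpos.le) hle 2
    _ = exp (-(t ^ 2 / 3)) := by rw [← exp_nat_mul]; ring_nf

lemma sinc2_nonneg (t : ℝ) : 0 ≤ sinc2 t := sinc2_eq_sinc_sq t ▸ sq_nonneg _

theorem setIntegral_Icc_sinc2_rpow_le {a p : ℝ} (hp : 0 < p) (ha : a ≤ π) :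
    ∫ t in Set.Icc (-a) a, sinc2 t ^ p ≤ √(3 * π / p) := by
  have hgauss : Integrable fun t : ℝ => exp (-(p / 3) * t ^ 2) :=
    integrable_exp_neg_mul_sq (by positivity)
  have hcont : Continuous fun t => sinc2 t ^ p := by
    simp only [sinc2_eq_sinc_sq]
    exact (continuous_sinc.pow 2).rpow_const fun _ => Or.inr hp.le
  have hpointwise : ∀ t ∈ Set.Icc (-a) a, sinc2 t ^ p ≤ exp (-(p / 3) * t ^ 2) := by
    intro t ht
    calc sinc2 t ^ p ≤ exp (-(t ^ 2 / 3)) ^ p :=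
          rpow_le_rpow (sinc2_nonneg t) (sinc2_le_exp_neg_sq_div_three
            (abs_le.2 ⟨by linarith [ht.1], ht.2.trans ha⟩)) hp.le
      _ = exp (-(p / 3) * t ^ 2) := by rw [← exp_mul]; ring_nf
  calc ∫ t in Set.Icc (-a) a, sinc2 t ^ p ≤ ∫ t in Set.Icc (-a) a, exp (-(p / 3) * t ^ 2) :=
        setIntegral_mono_on hcont.integrableOn_Icc hgauss.integrableOn measurableSet_Icc
          hpointwise
    _ ≤ ∫ t, exp (-(p / 3) * t ^ 2) :=
        setIntegral_le_integral hgauss (Eventually.of_forall fun t => (exp_pos _).le)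
    _ = √(3 * π / p) := by rw [integral_gaussian]; congr 1; field_simp

theorem ball_central_estimate (p : ℝ) (hp : 1 ≤ p) :
    (1 / π) * ∫ t in (-(6 / Real.sqrt 5))..(6 / Real.sqrt 5), sinc2 t ^ p ≤
      Real.sqrt (3 / π) / Real.sqrt p := by
  have hp₀ : 0 < p := zero_lt_one.trans_le hp
  have ha₀ : 0 ≤ 6 / √5 := by positivity
  have ha : 6 / √5 ≤ π := by
    have hsqrt5 : 2 ≤ √5 := le_sqrt_of_sq_le (by norm_num)
    rw [div_le_iff₀ (by positivity)]
    nlinarith [pi_gt_three]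
  have hrhs : 1 / π * √(3 * π / p) = √(3 / π) / √p := by
    rw [sqrt_div (by positivity) p, sqrt_div' _ pi_pos.le, sqrt_mul (by norm_num)]
    field_simp
    rw [sq_sqrt pi_pos.le]
  rw [intervalIntegral.integral_of_le (by linarith), ← integral_Icc_eq_integral_Ioc, ← hrhs]
  gcongr
  exact setIntegral_Icc_sinc2_rpow_le hp₀ ha
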